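/- arXiv:1806.07962 — 3 statements merged into one kernel-verified Lean document; each statement's English description precedes it below -/
import Mathlib

section
/- For real x with 0 < |x| < 1, ∫₀^π θ sin³θ / (1 − x² cos² θ) dθ = (π/x²) · (1 + ((x² − 1)/x) · artanh(x)). -/
/-!
Since the integrand is `θ · g θ` with `g (π - θ) = g θ`, the substitution `θ ↦ π - θ` gives
`∫₀^π θ g = (π/2) ∫₀^π g`. With `c = cos θ` one has `sin³θ dθ = -(1 - c²) dc` and
`(1 - c²)/(1 - x²c²) = 1/x² + (x² - 1)/(x² (1 - x²c²))`, so `g` has the elementary antiderivative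
`-(cos θ / x² + (x² - 1)/(2x³) · log ((1 + x cos θ)/(1 - x cos θ)))`, which evaluates to the
right-hand side between `0` and `π`.
-/

open Real intervalIntegral

theorem integral_id_mul_of_symmetric {f : ℝ → ℝ} {a b : ℝ}
    (hf : IntervalIntegrable f MeasureTheory.volume a b) (hsymm : ∀ x, f (a + b - x) = f x) :
    ∫ x in a..b, x * f x = (a + b) / 2 * ∫ x in a..b, f x := by
  have hreflect : ∫ x in a..b, (a + b - x) * f x = ∫ x in a..b, x * f x := by
    simpa only [hsymm, add_sub_cancel_right, add_sub_cancel_left] using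
      integral_comp_sub_left (fun y => y * f y) (a + b) (a := a) (b := b)
  have hsum : (∫ x in a..b, x * f x) + ∫ x in a..b, (a + b - x) * f x
      = (a + b) * ∫ x in a..b, f x := by
    rw [← integral_add (hf.continuousOn_mul (g := fun x => x) continuousOn_id)
      (hf.continuousOn_mul (g := fun x => a + b - x) (by fun_prop)), ← integral_const_mul]
    congr 1 with y
    ring
  linarith

section

variable {x : ℝ}

lemma one_add_mul_cos_pos (hx : |x| < 1) (θ : ℝ) : 0 < 1 + x * cos θ := by
  have : |x * cos θ| < 1 := by
    rw [abs_mul]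
    exact (mul_le_of_le_one_right (abs_nonneg x) (abs_cos_le_one θ)).trans_lt hx
  linarith [neg_abs_le (x * cos θ)]

lemma one_sub_mul_cos_pos (hx : |x| < 1) (θ : ℝ) : 0 < 1 - x * cos θ := by
  simpa using one_add_mul_cos_pos (x := -x) (by rwa [abs_neg]) θ

lemma one_sub_sq_mul_cos_sq_pos (hx : |x| < 1) (θ : ℝ) : 0 < 1 - x ^ 2 * cos θ ^ 2 := by
  have := mul_pos (one_add_mul_cos_pos hx θ) (one_sub_mul_cos_pos hx θ)
  linarith

noncomputable def antiderivSinCubeDiv (x θ : ℝ) : ℝ :=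
  -(cos θ / x ^ 2 + (x ^ 2 - 1) / (2 * x ^ 3) * (log (1 + x * cos θ) - log (1 - x * cos θ)))

lemma hasDerivAt_antiderivSinCubeDiv (hx : |x| < 1) (hx0 : x ≠ 0) (θ : ℝ) :
    HasDerivAt (antiderivSinCubeDiv x) (sin θ ^ 3 / (1 - x ^ 2 * cos θ ^ 2)) θ := by
  have hp := one_add_mul_cos_pos hx θ
  have hm := one_sub_mul_cos_pos hx θ
  have hcos := hasDerivAt_cos θ
  have hlogp := ((hcos.const_mul x).const_add 1).log hp.ne'
  have hlogm := ((hcos.const_mul x).const_sub 1).log hm.ne'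
  refine ((hcos.div_const (x ^ 2)).add ((hlogp.sub hlogm).const_mul
    ((x ^ 2 - 1) / (2 * x ^ 3)))).neg.congr_deriv ?_
  rw [show sin θ ^ 3 = sin θ * (1 - cos θ ^ 2) by rw [← sin_sq]; ring,
    show 1 - x ^ 2 * cos θ ^ 2 = (1 + x * cos θ) * (1 - x * cos θ) by ring]
  field_simp
  ring

lemma continuous_sin_pow_three_div (hx : |x| < 1) :
    Continuous fun θ => sin θ ^ 3 / (1 - x ^ 2 * cos θ ^ 2) := by
  fun_prop (disch := exact fun θ => (one_sub_sq_mul_cos_sq_pos hx θ).ne')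

lemma integral_sin_pow_three_div (hx : |x| < 1) (hx0 : x ≠ 0) :
    ∫ θ in (0:ℝ)..π, sin θ ^ 3 / (1 - x ^ 2 * cos θ ^ 2)
      = 2 / x ^ 2 * (1 + (x ^ 2 - 1) / x * (1 / 2 * log ((1 + x) / (1 - x)))) := by
  rw [integral_eq_sub_of_hasDerivAt (fun θ _ => hasDerivAt_antiderivSinCubeDiv hx hx0 θ)
    ((continuous_sin_pow_three_div hx).intervalIntegrable _ _)]
  have h1 : 0 < 1 + x := by simpa using one_add_mul_cos_pos hx 0
  have h2 : 0 < 1 - x := by simpa using one_sub_mul_cos_pos hx 0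
  simp only [antiderivSinCubeDiv, cos_pi, cos_zero, mul_neg, mul_one, ← sub_eq_add_neg,
    sub_neg_eq_add, log_div h1.ne' h2.ne']
  field_simp
  ring

end

theorem stmt_7 (x : ℝ) (hx : |x| < 1) (hx0 : x ≠ 0) :
    ∫ θ in (0:ℝ)..Real.pi, θ * Real.sin θ ^ 3 / (1 - x ^ 2 * Real.cos θ ^ 2)
      = Real.pi / x ^ 2 *
        (1 + (x ^ 2 - 1) / x * (1 / 2 * Real.log ((1 + x) / (1 - x)))) := by
  simp_rw [mul_div_assoc]
  rw [integral_id_mul_of_symmetric ((continuous_sin_pow_three_div hx).intervalIntegrable _ _)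
    (fun θ => by simp [sin_pi_sub, cos_pi_sub]), integral_sin_pow_three_div hx hx0]
  ring
end

section
/- For real x with 0 < |x| < 1, ∫₀^π θ sin⁵θ / (1 − x² cos² θ) dθ = (π/x⁴) · ((5/3)x² − 1 + ((x² − 1)²/x) · artanh(x)). -/
/-!
The reflection `θ ↦ π - θ` preserves `sin⁵ θ / (1 - x² cos² θ)`, so the weight `θ` may be replaced
by its mean `π / 2`. Under `u = cos θ` the remaining integral is `∫₋₁¹ (1 - u²)² / (1 - x² u²) du`,
which polynomial division in `u²` reduces to a polynomial plus a multiple of `1 / (1 - x² u²)`,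
whose primitive is `artanh (x u) / x`.
-/

open Real Filter Topology MeasureTheory

theorem Real.artanh_neg_eq_neg (y : ℝ) : artanh (-y) = -artanh y := by
  have : (1 + -y) / (1 - -y) = ((1 + y) / (1 - y))⁻¹ := by rw [inv_div]; ring_nf
  rw [artanh, artanh, this, sqrt_inv, log_inv]

theorem Real.hasDerivAt_artanh {y : ℝ} (hy : y ∈ Set.Ioo (-1) 1) :
    HasDerivAt artanh (1 / (1 - y ^ 2)) y := by
  have h1 : 0 < 1 + y := by linarith [hy.1]
  have h2 : 0 < 1 - y := by linarith [hy.2]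
  have hlog : HasDerivAt (fun z => 1 / 2 * (log (1 + z) - log (1 - z)))
      (1 / 2 * (1 / (1 + y) - -1 / (1 - y))) y := by
    simpa using ((((hasDerivAt_id y).const_add 1).log h1.ne').sub
      (((hasDerivAt_id y).const_sub 1).log h2.ne')).const_mul (1 / 2 : ℝ)
  have heq : artanh =ᶠ[𝓝 y] fun z => 1 / 2 * (log (1 + z) - log (1 - z)) := by
    filter_upwards [isOpen_Ioo.mem_nhds hy] with z hz
    have : 0 < 1 - z := by linarith [hz.2]
    rw [artanh_eq_half_log (Set.Ioo_subset_Icc_self hz), log_div (by linarith [hz.1]) this.ne']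
  refine (hlog.congr_of_eventuallyEq heq).congr_deriv ?_
  rw [show 1 - y ^ 2 = (1 + y) * (1 - y) by ring]
  field_simp
  ring

theorem intervalIntegral.integral_id_mul_of_symm {f : ℝ → ℝ} {a b : ℝ}
    (hf : IntervalIntegrable f volume a b) (hsymm : ∀ θ, f (a + b - θ) = f θ) :
    ∫ θ in a..b, θ * f θ = (a + b) / 2 * ∫ θ in a..b, f θ := by
  have hreflect := integral_comp_sub_left (a := a) (b := b) (fun θ => θ * f θ) (a + b)
  simp only [add_sub_cancel_left, add_sub_cancel_right, hsymm, sub_mul] at hreflect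
  have hid : IntervalIntegrable (fun θ => θ * f θ) volume a b :=
    hf.continuousOn_mul continuousOn_id
  rw [integral_sub (hf.const_mul _) hid, integral_const_mul] at hreflect
  linarith

/-- A primitive of `u ↦ (1 - u²)² / (1 - x² u²)`, read off from the division
`(1 - u²)² = (1 - x² u²) (-u² / x² + (2x² - 1) / x⁴) + (1 - x²)² / x⁴`. -/
noncomputable def quarticPrimitive (x u : ℝ) : ℝ :=
  -u ^ 3 / (3 * x ^ 2) + (2 * x ^ 2 - 1) / x ^ 4 * u + (1 - x ^ 2) ^ 2 / x ^ 5 * artanh (x * u)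

theorem hasDerivAt_quarticPrimitive {x u : ℝ} (hx : x ≠ 0) (hxu : |x * u| < 1) :
    HasDerivAt (quarticPrimitive x) ((1 - u ^ 2) ^ 2 / (1 - x ^ 2 * u ^ 2)) u := by
  have hartanh : HasDerivAt (fun v => artanh (x * v)) (1 / (1 - (x * u) ^ 2) * x) u :=
    (hasDerivAt_artanh (abs_lt.mp hxu)).comp u
      ((hasDerivAt_id u).const_mul x |>.congr_deriv (mul_one x))
  have hpoly := ((hasDerivAt_pow 3 u).neg.div_const (3 * x ^ 2)).add
    ((hasDerivAt_id u).const_mul ((2 * x ^ 2 - 1) / x ^ 4))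
  refine (hpoly.add (hartanh.const_mul ((1 - x ^ 2) ^ 2 / x ^ 5))).congr_deriv ?_
  have hden : 1 - x ^ 2 * u ^ 2 ≠ 0 := by
    have := (sq_lt_one_iff_abs_lt_one (x * u)).mpr hxu
    nlinarith
  rw [mul_pow]
  field_simp
  norm_num
  ring

theorem abs_mul_cos_lt_one {x : ℝ} (hx : |x| < 1) (θ : ℝ) : |x * cos θ| < 1 := by
  rw [abs_mul]
  exact lt_of_le_of_lt (mul_le_of_le_one_right (abs_nonneg x) (abs_cos_le_one θ)) hx

theorem one_sub_sq_mul_cos_sq_ne_zero {x : ℝ} (hx : |x| < 1) (θ : ℝ) :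
    1 - x ^ 2 * cos θ ^ 2 ≠ 0 := by
  have := (sq_lt_one_iff_abs_lt_one _).mpr (abs_mul_cos_lt_one hx θ)
  rw [mul_pow] at this
  linarith

theorem continuous_sin_pow_five_div {x : ℝ} (hx : |x| < 1) :
    Continuous fun θ => sin θ ^ 5 / (1 - x ^ 2 * cos θ ^ 2) := by
  fun_prop (disch := exact one_sub_sq_mul_cos_sq_ne_zero hx)

theorem integral_sin_pow_five_div {x : ℝ} (hx : |x| < 1) (hx0 : x ≠ 0) :
    ∫ θ in 0..π, sin θ ^ 5 / (1 - x ^ 2 * cos θ ^ 2)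
      = quarticPrimitive x 1 - quarticPrimitive x (-1) := by
  have hderiv (θ : ℝ) : HasDerivAt (fun θ => -quarticPrimitive x (cos θ))
      (sin θ ^ 5 / (1 - x ^ 2 * cos θ ^ 2)) θ := by
    refine ((hasDerivAt_quarticPrimitive hx0 (abs_mul_cos_lt_one hx θ)).comp θ
      (hasDerivAt_cos θ)).neg.congr_deriv ?_
    rw [← sin_sq]
    ring
  rw [intervalIntegral.integral_eq_sub_of_hasDerivAt (fun θ _ => hderiv θ)
    ((continuous_sin_pow_five_div hx).intervalIntegrable _ _)]
  simp only [cos_pi, cos_zero]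
  ring

theorem stmt_8 (x : ℝ) (hx : |x| < 1) (hx0 : x ≠ 0) :
    ∫ θ in (0:ℝ)..Real.pi, θ * Real.sin θ ^ 5 / (1 - x ^ 2 * Real.cos θ ^ 2)
      = Real.pi / x ^ 4 *
        (5 / 3 * x ^ 2 - 1 +
          (x ^ 2 - 1) ^ 2 / x * (1 / 2 * Real.log ((1 + x) / (1 - x)))) := by
  set f : ℝ → ℝ := fun θ => sin θ ^ 5 / (1 - x ^ 2 * cos θ ^ 2)
  have hsymm (θ : ℝ) : f (0 + π - θ) = f θ := by simp [f, sin_pi_sub, cos_pi_sub]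
  have hf : IntervalIntegrable f volume 0 π :=
    (continuous_sin_pow_five_div hx).intervalIntegrable _ _
  calc ∫ θ in (0:ℝ)..π, θ * sin θ ^ 5 / (1 - x ^ 2 * cos θ ^ 2)
      = ∫ θ in (0:ℝ)..π, θ * f θ := by simp only [f, mul_div_assoc]
    _ = π / 2 * (quarticPrimitive x 1 - quarticPrimitive x (-1)) := by
      rw [intervalIntegral.integral_id_mul_of_symm hf hsymm, zero_add,
        integral_sin_pow_five_div hx hx0]
    _ = _ := by
      simp only [quarticPrimitive, mul_one, mul_neg, artanh_neg_eq_neg]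
      rw [artanh_eq_half_log (Set.Ioo_subset_Icc_self (abs_lt.mp hx))]
      field_simp
      ring
end

section
/- For every positive integer k and real x with |x| ≤ 1, ∫₀^π θ sin θ · (1 + x² cos² θ)^{1/k} dθ = π · ∑_{j=0}^∞ binom(1/k, j) · x^{2j}/(2j+1), where binom(1/k, j) is the generalized binomial coefficient; equivalently this equals π · ₂F₁(1/2, −1/k; 3/2; −x²). -/
/-!
The reflection `θ ↦ π - θ` fixes `sin θ` and `cos² θ`, so the weight `θ` may be replaced by its
mean value `π / 2`. The substitution `u = cos θ` then leaves `(π / 2) ∫₋₁¹ (1 + x²u²)^{1/k} du`,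
which is integrated term by term along the binomial series of `(1 + t)^p`, `p = 1/k`. Dominated
convergence applies on the whole of `[-1, 1]`, even for `|x| = 1`, because for `0 ≤ p ≤ 1` the
coefficients satisfy `|binom(p, n+1)| = |binom(p-1, n)| - |binom(p-1, n+1)|`, so `∑ |binom(p, n)|`
telescopes and converges.
-/

/-- Generalized binomial coefficient `binom a n = a (a-1) ⋯ (a-n+1) / n!`. -/
noncomputable def genBinom (a : ℝ) (n : ℕ) : ℝ :=
  (∏ i ∈ Finset.range n, (a - i)) / n.factorial

open Finset MeasureTheory Real

theorem genBinom_eq_choose (a : ℝ) (n : ℕ) : genBinom a n = Ring.choose a n := by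
  rw [Ring.choose_eq_smul, genBinom, ← Polynomial.aeval_eq_smeval, Polynomial.aeval_def,
    ← Polynomial.eval_map, descPochhammer_map, descPochhammer_eval_eq_prod_range,
    smul_eq_mul, div_eq_inv_mul]

theorem hasSum_genBinom_mul_pow (a : ℝ) {t : ℝ} (ht : |t| < 1) :
    HasSum (fun n => genBinom a n * t ^ n) ((1 + t) ^ a) := by
  have h := one_add_rpow_hasFPowerSeriesOnBall_zero (a := a) |>.hasSum
    (y := t) (by simpa [← ofReal_norm] using ht)
  simpa [genBinom_eq_choose, binomialSeries, mul_comm] using h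

theorem genBinom_zero (a : ℝ) : genBinom a 0 = 1 := by
  simp [genBinom]

theorem genBinom_succ (a : ℝ) (n : ℕ) :
    genBinom a (n + 1) = genBinom a n * ((a - n) / (n + 1)) := by
  rw [genBinom, genBinom, prod_range_succ, Nat.factorial_succ]
  push_cast
  field_simp

theorem genBinom_succ_eq_div_mul_genBinom_sub_one (a : ℝ) (n : ℕ) :
    genBinom a (n + 1) = a / (n + 1) * genBinom (a - 1) n := by
  rw [genBinom, genBinom, prod_range_succ', Nat.factorial_succ]
  push_cast
  simp_rw [sub_add_eq_sub_sub_swap]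
  field_simp
  ring

theorem abs_genBinom_succ_eq_sub {p : ℝ} (hp0 : 0 ≤ p) (hp1 : p ≤ 1) (n : ℕ) :
    |genBinom p (n + 1)| = |genBinom (p - 1) n| - |genBinom (p - 1) (n + 1)| := by
  have hn : (0 : ℝ) < n + 1 := by positivity
  have hfactor : |p - 1 - n| = n + 1 - p := by
    rw [abs_of_nonpos (by linarith [n.cast_nonneg (α := ℝ)])]
    ring
  rw [genBinom_succ_eq_div_mul_genBinom_sub_one, genBinom_succ, abs_mul, abs_mul, abs_div,
    abs_div, hfactor, abs_of_nonneg hp0, abs_of_pos hn]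
  field_simp
  ring

theorem summable_abs_genBinom {p : ℝ} (hp0 : 0 ≤ p) (hp1 : p ≤ 1) :
    Summable fun n => |genBinom p n| := by
  rw [← summable_nat_add_iff 1]
  refine summable_of_sum_range_le (c := 1) (fun _ => abs_nonneg _) fun n => ?_
  simp_rw [abs_genBinom_succ_eq_sub hp0 hp1, sum_range_sub', genBinom_zero, abs_one]
  linarith [abs_nonneg (genBinom (p - 1) n)]

theorem integral_mul_eq_half_mul_integral_of_comp_sub_eq {f : ℝ → ℝ} {a : ℝ}
    (hf : IntervalIntegrable f volume 0 a) (hsymm : ∀ θ, f (a - θ) = f θ) :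
    ∫ θ in 0..a, θ * f θ = a / 2 * ∫ θ in 0..a, f θ := by
  have hreflect := intervalIntegral.integral_comp_sub_left (fun θ => θ * f θ) a (a := 0) (b := a)
  have hid_mul : IntervalIntegrable (fun θ => θ * f θ) volume 0 a :=
    hf.continuousOn_mul continuousOn_id
  simp only [hsymm, sub_self, sub_zero, sub_mul] at hreflect
  rw [intervalIntegral.integral_sub (hf.const_mul a) hid_mul,
    intervalIntegral.integral_const_mul] at hreflect
  linarith

theorem integral_sin_mul_comp_cos {g : ℝ → ℝ} (hg : Continuous g) :
    ∫ θ in 0..π, sin θ * g (cos θ) = ∫ u in -1..1, g u := by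
  have h := intervalIntegral.integral_comp_mul_deriv (a := 0) (b := π) (f := cos)
    (f' := fun θ => -sin θ) (fun θ _ => hasDerivAt_cos θ) continuous_sin.neg.continuousOn hg
  rw [cos_zero, cos_pi] at h
  rw [intervalIntegral.integral_symm 1 (-1), ← h, ← intervalIntegral.integral_neg]
  simp only [Function.comp_apply, mul_neg, neg_neg, mul_comm]

theorem integral_genBinom_mul_sq_mul_sq_pow (p x : ℝ) (j : ℕ) :
    ∫ u in -1..1, genBinom p j * (x ^ 2 * u ^ 2) ^ j
      = 2 * (genBinom p j * x ^ (2 * j) / (2 * j + 1)) := by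
  simp_rw [mul_pow, ← pow_mul, ← mul_assoc]
  rw [intervalIntegral.integral_const_mul, integral_pow,
    Odd.neg_one_pow ⟨j, rfl⟩, one_pow]
  push_cast
  field_simp
  ring

theorem hasSum_integral_one_add_sq_mul_sq_rpow {p x : ℝ}
    (hp : Summable fun n => |genBinom p n|) (hx : |x| ≤ 1) :
    HasSum (fun j : ℕ => 2 * (genBinom p j * x ^ (2 * j) / (2 * j + 1)))
      (∫ u in -1..1, (1 + x ^ 2 * u ^ 2) ^ p) := by
  have hx2 : x ^ 2 ≤ 1 := sq_le_one_iff_abs_le_one x |>.mpr hx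
  simp_rw [← integral_genBinom_mul_sq_mul_sq_pow]
  refine intervalIntegral.hasSum_integral_of_dominated_convergence (fun j _ => |genBinom p j|)
    (fun j => by fun_prop) (fun j => ae_of_all _ fun u hu => ?_) (ae_of_all _ fun _ _ => hp)
    intervalIntegrable_const ?_
  · rw [Set.uIoc_of_le (by norm_num)] at hu
    have hu2 : u ^ 2 ≤ 1 := sq_le_one_iff_abs_le_one u |>.mpr (abs_le.mpr ⟨hu.1.le, hu.2⟩)
    simp only [norm_mul, norm_pow, Real.norm_eq_abs, sq_abs]
    exact mul_le_of_le_one_right (abs_nonneg _)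
      (pow_le_one₀ (by positivity) (mul_le_one₀ hx2 (sq_nonneg u) hu2))
  -- For `|x| = 1` the series may diverge at `u = 1`, a null set.
  · filter_upwards [Measure.ae_ne volume 1] with u hu1 hu
    rw [Set.uIoc_of_le (by norm_num)] at hu
    have hu2 : u ^ 2 < 1 :=
      sq_lt_one_iff_abs_lt_one u |>.mpr (abs_lt.mpr ⟨hu.1, hu.2.lt_of_ne hu1⟩)
    refine hasSum_genBinom_mul_pow p ?_
    rw [abs_of_nonneg (by positivity)]
    exact (mul_le_of_le_one_left (sq_nonneg u) hx2).trans_lt hu2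

theorem stmt_12_general (k : ℕ) (x : ℝ) (hx : |x| ≤ 1) :
    ∫ θ in (0:ℝ)..Real.pi,
        θ * Real.sin θ * (1 + x ^ 2 * Real.cos θ ^ 2) ^ ((1 : ℝ) / k)
      = Real.pi * ∑' j : ℕ, genBinom (1 / k) j * x ^ (2 * j) / (2 * j + 1) := by
  set p : ℝ := 1 / k
  have hp0 : 0 ≤ p := by positivity
  have hp1 : p ≤ 1 := by simpa only [p, one_div] using Nat.cast_inv_le_one k
  set G : ℝ → ℝ := fun u => (1 + x ^ 2 * u ^ 2) ^ p
  have hG : Continuous G :=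
    (continuous_const.add (by fun_prop)).rpow_const fun _ => Or.inr hp0
  have hsymm (θ : ℝ) : sin (π - θ) * G (cos (π - θ)) = sin θ * G (cos θ) := by
    simp only [G, sin_pi_sub, cos_pi_sub, neg_sq]
  calc ∫ θ in 0..π, θ * sin θ * G (cos θ)
      = π / 2 * ∫ θ in 0..π, sin θ * G (cos θ) := by
        simp_rw [mul_assoc]
        exact integral_mul_eq_half_mul_integral_of_comp_sub_eq
          ((continuous_sin.mul (hG.comp continuous_cos)).intervalIntegrable _ _) hsymm
    _ = π / 2 * ∫ u in -1..1, G u := by rw [integral_sin_mul_comp_cos hG]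
    _ = π * ∑' j : ℕ, genBinom p j * x ^ (2 * j) / (2 * j + 1) := by
        rw [← (hasSum_integral_one_add_sq_mul_sq_rpow (summable_abs_genBinom hp0 hp1) hx).tsum_eq,
          tsum_mul_left]
        ring

theorem stmt_12 (k : ℕ) (hk : 0 < k) (x : ℝ) (hx : |x| ≤ 1) :
    ∫ θ in (0:ℝ)..Real.pi,
        θ * Real.sin θ * (1 + x ^ 2 * Real.cos θ ^ 2) ^ ((1 : ℝ) / k)
      = Real.pi * ∑' j : ℕ, genBinom (1 / k) j * x ^ (2 * j) / (2 * j + 1) :=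
  stmt_12_general k x hx
end
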